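/- arXiv:2310.01270 — 5 statements merged into one kernel-verified Lean document; each statement's English description precedes it below -/
import Mathlib

section
/- For n ≥ 0, the number of binary Burge matrices of size n equals the number of pairs (u,v) with u ∈ WI[n], v ∈ Cay[n] and Des(u) ⊆ Des∘(v); and the number of Burge matrices of size n whose every column sums to 1 equals the number of pairs (u,v) with u ∈ WI[n], v a permutation of {1,…,n}, and Des(u) ⊆ Des(v). -/
/-!
Writing `≺` for the order on `ℕ × ℕ` that compares first entries increasingly and breaks ties
by decreasing second entries, `(u, v)` with `u` weakly increasing and `Des(u) ⊆ Des∘(v)` is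
exactly a word `t ↦ (u t, v t)` that is strictly `≺`-increasing. Such a word is determined by
its set of letters, and every finite set is the set of letters of one. A binary matrix is
likewise determined by the set of positions of its ones. So both binary Burge matrices and
these pairs correspond to the sets `S ⊆ ℕ × ℕ` of size `n` whose projections are `{1,…,p}`
and `{1,…,q}`. Column sums `1`, respectively `v` being a permutation, both say that `S` meets
every column at most once; for injective `v`, weak and strict descents coincide.
-/

namespace CayPaper

/-- A word of length `n` (1-indexed): it vanishes outside `{1,…,n}`. -/
def IsWord (n : ℕ) (v : ℕ → ℕ) : Prop := ∀ i, i ∉ Set.Icc 1 n → v i = 0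

/-- A Cayley permutation of length `n`: a word on `{1,…,n}` whose image is `{1,…,k}`
for some `k ≤ n`. -/
def IsCayley (n : ℕ) (v : ℕ → ℕ) : Prop :=
  IsWord n v ∧ ∃ k, v '' Set.Icc 1 n = Set.Icc 1 k

/-- A weakly increasing Cayley permutation of length `n`. -/
def IsWI (n : ℕ) (v : ℕ → ℕ) : Prop :=
  IsCayley n v ∧ MonotoneOn v (Set.Icc 1 n)

/-- A permutation of `{1,…,n}`, encoded as a word. -/
def IsPermWord (n : ℕ) (v : ℕ → ℕ) : Prop :=
  IsWord n v ∧ Set.BijOn v (Set.Icc 1 n) (Set.Icc 1 n)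

/-- The weak descent set `Des(v) = { i ∈ {1,…,n−1} : v(i) ≥ v(i+1) }`. -/
def desSet (n : ℕ) (v : ℕ → ℕ) : Finset ℕ :=
  (Finset.Icc 1 (n - 1)).filter fun i => v (i + 1) ≤ v i

/-- The strict descent set `Des∘(v) = { i : v(i) > v(i+1) }`. -/
def sdesSet (n : ℕ) (v : ℕ → ℕ) : Finset ℕ :=
  (Finset.Icc 1 (n - 1)).filter fun i => v (i + 1) < v i

/-- The weak ascent set `Asc(v) = { i : v(i) ≤ v(i+1) }`. -/
def ascSet (n : ℕ) (v : ℕ → ℕ) : Finset ℕ :=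
  (Finset.Icc 1 (n - 1)).filter fun i => v i ≤ v (i + 1)

/-- The strict ascent set `Asc∘(v) = { i : v(i) < v(i+1) }`. -/
def sascSet (n : ℕ) (v : ℕ → ℕ) : Finset ℕ :=
  (Finset.Icc 1 (n - 1)).filter fun i => v i < v (i + 1)

def des (n : ℕ) (v : ℕ → ℕ) : ℕ := (desSet n v).card
def sdes (n : ℕ) (v : ℕ → ℕ) : ℕ := (sdesSet n v).card
def asc (n : ℕ) (v : ℕ → ℕ) : ℕ := (ascSet n v).card
def sasc (n : ℕ) (v : ℕ → ℕ) : ℕ := (sascSet n v).card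

/-- The maximum value of a word. -/
def wmax (n : ℕ) (v : ℕ → ℕ) : ℕ := (Finset.Icc 1 n).sup v

/-- Reverse: `v^r(i) = v(n+1−i)`. -/
def wrev (n : ℕ) (v : ℕ → ℕ) : ℕ → ℕ := fun i =>
  if 1 ≤ i ∧ i ≤ n then v (n + 1 - i) else 0

/-- Complement: `v^c(i) = max(v)+1−v(i)`. -/
def wcomp (n : ℕ) (v : ℕ → ℕ) : ℕ → ℕ := fun i =>
  if 1 ≤ i ∧ i ≤ n then wmax n v + 1 - v i else 0

/-- The word `(σ(1), …, σ(n))` (1-indexed) of a permutation `σ` of `Fin n`. -/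
def permWord (n : ℕ) (σ : Equiv.Perm (Fin n)) : ℕ → ℕ := fun i =>
  if h : 1 ≤ i ∧ i ≤ n then ((σ ⟨i - 1, by omega⟩ : Fin n) : ℕ) + 1 else 0

/-- The conjugate of `u`: the unique weakly increasing Cayley permutation of
length `n` whose descent set is `{1,…,n−1} \ Des(u)`. -/
noncomputable def conjWI (n : ℕ) (u : ℕ → ℕ) : ℕ → ℕ :=
  haveI := Classical.dec (∃ w, IsWI n w ∧ desSet n w = Finset.Icc 1 (n - 1) \ desSet n u)
  if h : ∃ w, IsWI n w ∧ desSet n w = Finset.Icc 1 (n - 1) \ desSet n u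
    then h.choose else fun _ => 0

/-- A Burge matrix: every row and every column contains a nonzero entry. -/
def IsBurge {p q : ℕ} (M : Matrix (Fin p) (Fin q) ℕ) : Prop :=
  (∀ i, ∃ j, M i j ≠ 0) ∧ (∀ j, ∃ i, M i j ≠ 0)

/-- The size of a matrix with natural entries: the sum of its entries. -/
def matSize {p q : ℕ} (M : Matrix (Fin p) (Fin q) ℕ) : ℕ := ∑ i, ∑ j, M i j

/-- Burge matrices of size `n` (of all dimensions). -/
def BurgeMatrices (n : ℕ) : Set (Σ p : ℕ, Σ q : ℕ, Matrix (Fin p) (Fin q) ℕ) :=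
  {M | IsBurge M.2.2 ∧ matSize M.2.2 = n}

/-- Binary Burge matrices of size `n`. -/
def BinaryBurgeMatrices (n : ℕ) : Set (Σ p : ℕ, Σ q : ℕ, Matrix (Fin p) (Fin q) ℕ) :=
  {M | M ∈ BurgeMatrices n ∧ ∀ i j, M.2.2 i j ≤ 1}

/-- Burge matrices of size `n` whose every column sums to `1`. -/
def ColSumOneBurgeMatrices (n : ℕ) : Set (Σ p : ℕ, Σ q : ℕ, Matrix (Fin p) (Fin q) ℕ) :=
  {M | M ∈ BurgeMatrices n ∧ ∀ j, ∑ i, M.2.2 i j = 1}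

/-- Burge words: pairs `(u,v) ∈ WI[n] × Cay[n]` with `Des(u) ⊆ Des(v)`. -/
def BurPairs (n : ℕ) : Set ((ℕ → ℕ) × (ℕ → ℕ)) :=
  {p | IsWI n p.1 ∧ IsCayley n p.2 ∧ desSet n p.1 ⊆ desSet n p.2}

/-- Pairs `(u,v) ∈ WI[n] × Cay[n]` with `Des(u) ⊆ Des∘(v)`. -/
def BBurPairs (n : ℕ) : Set ((ℕ → ℕ) × (ℕ → ℕ)) :=
  {p | IsWI n p.1 ∧ IsCayley n p.2 ∧ desSet n p.1 ⊆ sdesSet n p.2}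

/-- Pairs `(u,v) ∈ WI[n] × S_n` with `Des(u) ⊆ Des(v)`. -/
def PBurPairs (n : ℕ) : Set ((ℕ → ℕ) × (ℕ → ℕ)) :=
  {p | IsWI n p.1 ∧ IsPermWord n p.2 ∧ desSet n p.1 ⊆ desSet n p.2}

/-- `Ω[n]`: pairs `(u,v) ∈ WI[n] × Cay[n]` with `Des(u) ⊇ Des(v)`. -/
def OmegaPairs (n : ℕ) : Set ((ℕ → ℕ) × (ℕ → ℕ)) :=
  {p | IsWI n p.1 ∧ IsCayley n p.2 ∧ desSet n p.2 ⊆ desSet n p.1}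

/-- `v` lists the positions `1,…,n` in the order obtained by sorting the columns
`(x_i, i)` so that first components are weakly increasing, ties broken by strictly
decreasing second components.  For a permutation word `v` this says exactly that
`v = Γ(id, x)`, the bottom row of the Burge transpose of `(id, x)`. -/
def sortsColumns (n : ℕ) (x v : ℕ → ℕ) : Prop :=
  ∀ i ∈ Finset.Icc 1 (n - 1),
    x (v i) < x (v (i + 1)) ∨ (x (v i) = x (v (i + 1)) ∧ v (i + 1) < v i)

/-- The Fishburn basis of a permutation word `v`:
`basis(v) = { x ∈ Cay[n] : Γ(id, x) = v }`. -/
def fishburnBasis (n : ℕ) (v : ℕ → ℕ) : Set (ℕ → ℕ) :=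
  {x | IsCayley n x ∧ sortsColumns n x v}

/-- Stanley's `v`-compatibility condition:
`x(v(1)) ≤ ⋯ ≤ x(v(n))` with strict inequality at every ascent of `v`. -/
def VCompatible (n : ℕ) (v x : ℕ → ℕ) : Prop :=
  (∀ i ∈ Finset.Icc 1 (n - 1), x (v i) ≤ x (v (i + 1))) ∧
    ∀ i ∈ Finset.Icc 1 (n - 1), v i < v (i + 1) → x (v i) < x (v (i + 1))

/-- A map `{1,…,n} → {1,…,m}`, encoded as a word. -/
def IsMapTo (n m : ℕ) (x : ℕ → ℕ) : Prop :=
  IsWord n x ∧ ∀ i ∈ Set.Icc 1 n, x i ∈ Set.Icc 1 m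

/-- Weakly increasing maps `{1,…,n} → {1,…,m}`. -/
def WIgen (n m : ℕ) : Set (ℕ → ℕ) :=
  {u | IsMapTo n m u ∧ MonotoneOn u (Set.Icc 1 n)}


open Finset

lemma _root_.Set.BijOn.sep {α β : Type*} {f : α → β} {s : Set α} {t : Set β}
    (h : Set.BijOn f s t) (P : β → Prop) : Set.BijOn f {x ∈ s | P (f x)} {y ∈ t | P y} := by
  refine ⟨fun x hx => ⟨h.mapsTo hx.1, hx.2⟩, h.injOn.mono fun x hx => hx.1, fun y hy => ?_⟩
  obtain ⟨x, hx, rfl⟩ := h.surjOn hy.1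
  exact ⟨x, ⟨hx, hy.2⟩, rfl⟩

lemma exists_fin_add_one_eq {n t : ℕ} (ht : t ∈ Set.Icc 1 n) :
    ∃ i : Fin n, (i : ℕ) + 1 = t := by
  obtain ⟨h1, h2⟩ := ht
  exact ⟨⟨t - 1, by omega⟩, by simp; omega⟩

lemma image_Icc_one_eq_image_univ {β : Type*} [DecidableEq β] (n : ℕ) (F : ℕ → β) :
    (Icc 1 n).image F = univ.image fun i : Fin n => F (i + 1) := by
  ext y
  simp only [mem_image, mem_univ, true_and]
  constructor
  · rintro ⟨t, ht, rfl⟩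
    obtain ⟨i, rfl⟩ := exists_fin_add_one_eq (by simpa using ht)
    exact ⟨i, rfl⟩
  · rintro ⟨i, rfl⟩
    exact ⟨i + 1, mem_Icc.mpr ⟨by omega, i.2⟩, rfl⟩

lemma apply_add_one_eq_orderEmbOfFin {α : Type*} [LinearOrder α] {n : ℕ} {f : ℕ → α}
    (hf : StrictMonoOn f (Set.Icc 1 n)) (h : ((Icc 1 n).image f).card = n) (i : Fin n) :
    f (i + 1) = ((Icc 1 n).image f).orderEmbOfFin h i := by
  refine congrFun (orderEmbOfFin_unique h (f := fun i : Fin n => f (i + 1)) (fun i => ?_) ?_) i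
  · exact mem_image_of_mem f (mem_Icc.mpr ⟨by omega, i.2⟩)
  · intro i j hij
    exact hf (Set.mem_Icc.mpr ⟨by omega, i.2⟩) (Set.mem_Icc.mpr ⟨by omega, j.2⟩)
      (by simpa using hij)

lemma card_image_Icc_of_strictMonoOn {α : Type*} [LinearOrder α] {n : ℕ} {f : ℕ → α}
    (hf : StrictMonoOn f (Set.Icc 1 n)) : ((Icc 1 n).image f).card = n := by
  rw [card_image_of_injOn (by simpa using hf.injOn), Nat.card_Icc, Nat.add_sub_cancel]

lemma eqOn_of_strictMonoOn_of_image_eq {α : Type*} [LinearOrder α] {n : ℕ} {f g : ℕ → α}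
    (hf : StrictMonoOn f (Set.Icc 1 n)) (hg : StrictMonoOn g (Set.Icc 1 n))
    (h : (Icc 1 n).image f = (Icc 1 n).image g) : Set.EqOn f g (Set.Icc 1 n) := by
  intro t ht
  obtain ⟨i, rfl⟩ := exists_fin_add_one_eq ht
  rw [apply_add_one_eq_orderEmbOfFin hf (card_image_Icc_of_strictMonoOn hf),
    apply_add_one_eq_orderEmbOfFin hg (card_image_Icc_of_strictMonoOn hg)]
  simp only [h]

def BurgeSets (n : ℕ) : Set (Finset (ℕ × ℕ)) :=
  {S | S.card = n ∧ (∃ p, S.image Prod.fst = Icc 1 p) ∧ ∃ q, S.image Prod.snd = Icc 1 q}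

section Support

variable {p q : ℕ}

def support (M : Matrix (Fin p) (Fin q) ℕ) : Finset (ℕ × ℕ) :=
  (univ.filter fun x : Fin p × Fin q => M x.1 x.2 ≠ 0).image
    fun x => ((x.1 : ℕ) + 1, (x.2 : ℕ) + 1)

lemma mk_mem_support {M : Matrix (Fin p) (Fin q) ℕ} {a b : ℕ} :
    (a, b) ∈ support M ↔
      ∃ (i : Fin p) (j : Fin q), M i j ≠ 0 ∧ (i : ℕ) + 1 = a ∧ (j : ℕ) + 1 = b := by
  simp [support]

lemma succ_mem_support {M : Matrix (Fin p) (Fin q) ℕ} {i : Fin p} {j : Fin q} :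
    ((i : ℕ) + 1, (j : ℕ) + 1) ∈ support M ↔ M i j ≠ 0 := by
  rw [mk_mem_support]
  constructor
  · rintro ⟨i', j', h, hi, hj⟩
    rwa [← Fin.ext (Nat.succ_injective hi), ← Fin.ext (Nat.succ_injective hj)]
  · exact fun h => ⟨i, j, h, rfl, rfl⟩

lemma support_subset (M : Matrix (Fin p) (Fin q) ℕ) : support M ⊆ Icc 1 p ×ˢ Icc 1 q := by
  rintro ⟨a, b⟩ h
  obtain ⟨i, j, -, rfl, rfl⟩ := mk_mem_support.mp h
  simp only [mem_product, mem_Icc]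
  omega

lemma card_support {M : Matrix (Fin p) (Fin q) ℕ} (hbin : ∀ i j, M i j ≤ 1) :
    (support M).card = matSize M := by
  have hinj : Function.Injective fun x : Fin p × Fin q => ((x.1 : ℕ) + 1, (x.2 : ℕ) + 1) := by
    rintro ⟨i, j⟩ ⟨i', j'⟩ h
    simp only [Prod.mk.injEq, add_left_inj, Fin.val_inj] at h
    rw [h.1, h.2]
  rw [support, card_image_of_injective _ hinj, card_filter, matSize]
  refine (Fintype.sum_prod_type' (fun i j => if M i j ≠ 0 then 1 else 0)).trans ?_
  refine sum_congr rfl fun i _ => sum_congr rfl fun j _ => ?_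
  have := hbin i j
  split_ifs <;> omega

lemma image_fst_support {M : Matrix (Fin p) (Fin q) ℕ} :
    (support M).image Prod.fst = Icc 1 p ↔ ∀ i, ∃ j, M i j ≠ 0 := by
  constructor
  · intro h i
    obtain ⟨⟨a, b⟩, hab, rfl⟩ := mem_image.mp (h ▸ mem_Icc.mpr ⟨by omega, by omega⟩ :
      (i : ℕ) + 1 ∈ (support M).image Prod.fst)
    obtain ⟨i', j, hM, hi, -⟩ := mk_mem_support.mp hab
    exact ⟨j, by rwa [← Fin.ext (Nat.succ_injective hi)]⟩
  · refine fun h => Subset.antisymm (fun a ha => ?_) (fun a ha => ?_)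
    · obtain ⟨x, hx, rfl⟩ := mem_image.mp ha
      exact (mem_product.mp (support_subset M hx)).1
    · have ha' := mem_Icc.mp ha
      obtain ⟨j, hj⟩ := h ⟨a - 1, by omega⟩
      exact mem_image.mpr
        ⟨_, mk_mem_support.mpr ⟨_, j, hj, Nat.sub_add_cancel ha'.1, rfl⟩, rfl⟩

lemma support_transpose (M : Matrix (Fin p) (Fin q) ℕ) :
    support M.transpose = (support M).image Prod.swap := by
  ext ⟨a, b⟩
  rw [mk_mem_support, ← Prod.swap_swap (a, b), Prod.swap_injective.mem_finset_image,
    Prod.swap_prod_mk, mk_mem_support]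
  exact ⟨fun ⟨j, i, h, hj, hi⟩ => ⟨i, j, h, hi, hj⟩,
    fun ⟨i, j, h, hi, hj⟩ => ⟨j, i, h, hj, hi⟩⟩

lemma image_snd_support {M : Matrix (Fin p) (Fin q) ℕ} :
    (support M).image Prod.snd = Icc 1 q ↔ ∀ j, ∃ i, M i j ≠ 0 := by
  have h := image_fst_support (M := M.transpose)
  rwa [support_transpose, image_image] at h

def ofSupport (p q : ℕ) (S : Finset (ℕ × ℕ)) : Matrix (Fin p) (Fin q) ℕ :=
  fun i j => if ((i : ℕ) + 1, (j : ℕ) + 1) ∈ S then 1 else 0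

lemma ofSupport_le_one (S : Finset (ℕ × ℕ)) (i : Fin p) (j : Fin q) :
    ofSupport p q S i j ≤ 1 := by
  unfold ofSupport; split_ifs <;> omega

lemma support_ofSupport {S : Finset (ℕ × ℕ)} (hS : S ⊆ Icc 1 p ×ˢ Icc 1 q) :
    support (ofSupport p q S) = S := by
  ext ⟨a, b⟩
  rw [mk_mem_support]
  constructor
  · rintro ⟨i, j, h, rfl, rfl⟩
    simpa [ofSupport] using h
  · intro h
    have hab := mem_product.mp (hS h)
    simp only [mem_Icc] at hab
    exact ⟨⟨a - 1, by omega⟩, ⟨b - 1, by omega⟩, by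
      simp [ofSupport, Nat.sub_add_cancel hab.1.1, Nat.sub_add_cancel hab.2.1, h], by simp; omega,
      by simp; omega⟩

lemma ofSupport_support {M : Matrix (Fin p) (Fin q) ℕ} (hbin : ∀ i j, M i j ≤ 1) :
    ofSupport p q (support M) = M := by
  ext i j
  have := hbin i j
  simp only [ofSupport, succ_mem_support]
  split_ifs <;> omega

lemma bijOn_support (n : ℕ) :
    Set.BijOn (fun M => support M.2.2) (BinaryBurgeMatrices n) (BurgeSets n) := by
  refine ⟨?_, ?_, ?_⟩
  · rintro ⟨p, q, M⟩ ⟨⟨hB, hsize⟩, hbin⟩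
    exact ⟨(card_support hbin).trans hsize, ⟨p, image_fst_support.mpr hB.1⟩,
      q, image_snd_support.mpr hB.2⟩
  · rintro ⟨p, q, M⟩ ⟨⟨hB, -⟩, hbin⟩ ⟨p', q', M'⟩ ⟨⟨hB', -⟩, hbin'⟩
      (h : support M = support M')
    change IsBurge M at hB
    change IsBurge M' at hB'
    have hp : Icc 1 p = Icc 1 p' := by
      rw [← image_fst_support.mpr hB.1, h, image_fst_support.mpr hB'.1]
    have hq : Icc 1 q = Icc 1 q' := by
      rw [← image_snd_support.mpr hB.2, h, image_snd_support.mpr hB'.2]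
    obtain rfl : p = p' := by simpa using congrArg card hp
    obtain rfl : q = q' := by simpa using congrArg card hq
    change ∀ i j, M i j ≤ 1 at hbin
    change ∀ i j, M' i j ≤ 1 at hbin'
    rw [← ofSupport_support hbin, ← ofSupport_support hbin', h]
  · rintro S ⟨hcard, ⟨p, hp⟩, q, hq⟩
    have hS : S ⊆ Icc 1 p ×ˢ Icc 1 q := fun x hx =>
      mem_product.mpr ⟨hp ▸ mem_image_of_mem _ hx, hq ▸ mem_image_of_mem _ hx⟩
    refine ⟨⟨p, q, ofSupport p q S⟩, ⟨⟨⟨?_, ?_⟩, ?_⟩, ofSupport_le_one S⟩,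
      support_ofSupport hS⟩
    · exact image_fst_support.mp (by rw [support_ofSupport hS, hp])
    · exact image_snd_support.mp (by rw [support_ofSupport hS, hq])
    · rw [← card_support (ofSupport_le_one S), support_ofSupport hS, hcard]

lemma colSum_eq_one_iff_injOn_snd {M : Matrix (Fin p) (Fin q) ℕ}
    (hbin : ∀ i j, M i j ≤ 1) (hcol : ∀ j, ∃ i, M i j ≠ 0) :
    (∀ j, ∑ i, M i j = 1) ↔ Set.InjOn Prod.snd (support M : Set (ℕ × ℕ)) := by
  have hsum : ∀ j, ∑ i, M i j = #{i | M i j ≠ 0} := fun j => by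
    rw [card_filter]
    refine sum_congr rfl fun i _ => ?_
    have := hbin i j
    split_ifs <;> omega
  simp only [hsum]
  constructor
  · rintro h ⟨a, b⟩ hx ⟨a', b'⟩ hy (rfl : b = b')
    obtain ⟨i, j, hij, rfl, rfl⟩ := mk_mem_support.mp hx
    obtain ⟨i', j', hij', rfl, hj⟩ := mk_mem_support.mp hy
    obtain rfl : j' = j := Fin.ext (Nat.succ_injective hj)
    obtain rfl : i = i' := card_le_one.mp (h j').le i (mem_filter.mpr ⟨mem_univ _, hij⟩)
      i' (mem_filter.mpr ⟨mem_univ _, hij'⟩)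
    rfl
  · intro h j
    obtain ⟨i₀, hi₀⟩ := hcol j
    refine le_antisymm (card_le_one.mpr fun i hi i' hi' => ?_)
      (card_pos.mpr ⟨i₀, mem_filter.mpr ⟨mem_univ _, hi₀⟩⟩)
    have := h (succ_mem_support.mpr (mem_filter.mp hi).2)
      (succ_mem_support.mpr (mem_filter.mp hi').2) rfl
    simp only [Prod.mk.injEq, add_left_inj, Fin.val_inj] at this
    exact this.1

lemma colSumOneBurgeMatrices_eq_sep (n : ℕ) :
    ColSumOneBurgeMatrices n =
      {M ∈ BinaryBurgeMatrices n |
        Set.InjOn Prod.snd (↑(support M.2.2) : Set (ℕ × ℕ))} := by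
  ext ⟨p, q, M⟩
  change (IsBurge M ∧ matSize M = n) ∧ (∀ j, ∑ i, M i j = 1) ↔
    ((IsBurge M ∧ matSize M = n) ∧ ∀ i j, M i j ≤ 1) ∧
      Set.InjOn Prod.snd (↑(support M) : Set (ℕ × ℕ))
  constructor
  · rintro ⟨hM, hsum⟩
    have hbin : ∀ i j, M i j ≤ 1 := fun i j =>
      hsum j ▸ single_le_sum (f := (M · j)) (fun _ _ => Nat.zero_le _) (mem_univ i)
    exact ⟨⟨hM, hbin⟩, (colSum_eq_one_iff_injOn_snd hbin hM.1.2).mp hsum⟩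
  · rintro ⟨⟨hM, hbin⟩, hinj⟩
    exact ⟨hM, (colSum_eq_one_iff_injOn_snd hbin hM.1.2).mpr hinj⟩

end Support

def burgeOrder : ℕ × ℕ ≃ ℕ ×ₗ ℕᵒᵈ :=
  (Equiv.prodCongr (Equiv.refl ℕ) OrderDual.toDual).trans toLex

lemma burgeOrder_lt_burgeOrder {a b a' b' : ℕ} :
    burgeOrder (a, b) < burgeOrder (a', b') ↔ a < a' ∨ a = a' ∧ b' < b := by
  simp [burgeOrder, Prod.Lex.toLex_lt_toLex]

def graph (n : ℕ) (u v : ℕ → ℕ) : Finset (ℕ × ℕ) := (Icc 1 n).image fun t => (u t, v t)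

lemma monotoneOn_and_desSet_subset_sdesSet_iff {n : ℕ} {u v : ℕ → ℕ} :
    MonotoneOn u (Set.Icc 1 n) ∧ desSet n u ⊆ sdesSet n v ↔
      StrictMonoOn (fun t => burgeOrder (u t, v t)) (Set.Icc 1 n) := by
  simp only [desSet, sdesSet, subset_iff, mem_filter, mem_Icc, and_imp]
  constructor
  · rintro ⟨hu, hd⟩
    refine strictMonoOn_of_lt_add_one Set.ordConnected_Icc fun a _ ha ha' => ?_
    rw [burgeOrder_lt_burgeOrder]
    rcases (hu ha ha' (Nat.le_succ a)).lt_or_eq with h | h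
    · exact Or.inl h
    · exact Or.inr ⟨h, (hd ha.1 (by have := ha'.2; omega) h.ge).2⟩
  · intro h
    refine ⟨fun s hs t ht hst => Prod.Lex.monotone_fst_ofLex (h.monotoneOn hs ht hst),
      fun i hi1 hin hle => ⟨⟨hi1, hin⟩, ?_⟩⟩
    have := burgeOrder_lt_burgeOrder.mp (h (Set.mem_Icc.mpr ⟨hi1, by omega⟩)
      (Set.mem_Icc.mpr ⟨by omega, by omega⟩) (lt_add_one i))
    omega

lemma isCayley_iff {n : ℕ} {u : ℕ → ℕ} :
    IsCayley n u ↔ IsWord n u ∧ ∃ k, (Icc 1 n).image u = Icc 1 k := by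
  simp only [IsCayley, ← coe_Icc, ← coe_image, coe_inj]

lemma image_fst_graph (n : ℕ) (u v : ℕ → ℕ) :
    (graph n u v).image Prod.fst = (Icc 1 n).image u := by
  rw [graph, image_image]
  rfl

lemma image_snd_graph (n : ℕ) (u v : ℕ → ℕ) :
    (graph n u v).image Prod.snd = (Icc 1 n).image v := by
  rw [graph, image_image]
  rfl

lemma image_burgeOrder_graph (n : ℕ) (u v : ℕ → ℕ) :
    (graph n u v).image burgeOrder = (Icc 1 n).image fun t => burgeOrder (u t, v t) := by
  rw [graph, image_image]
  rfl

lemma mk_mem_bBurPairs_iff {n : ℕ} {u v : ℕ → ℕ} :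
    (u, v) ∈ BBurPairs n ↔ (IsWord n u ∧ IsWord n v) ∧
      StrictMonoOn (fun t => burgeOrder (u t, v t)) (Set.Icc 1 n) ∧
      (∃ p, (graph n u v).image Prod.fst = Icc 1 p) ∧
      ∃ q, (graph n u v).image Prod.snd = Icc 1 q := by
  simp only [BBurPairs, Set.mem_ofPred_eq, IsWI, isCayley_iff, image_fst_graph, image_snd_graph,
    ← monotoneOn_and_desSet_subset_sdesSet_iff]
  tauto

lemma card_graph {n : ℕ} {u v : ℕ → ℕ}
    (h : StrictMonoOn (fun t => burgeOrder (u t, v t)) (Set.Icc 1 n)) : (graph n u v).card = n := by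
  rw [← card_image_of_injective _ burgeOrder.injective, image_burgeOrder_graph]
  exact card_image_Icc_of_strictMonoOn h

def ofFin {n : ℕ} (f : Fin n → ℕ) : ℕ → ℕ :=
  fun t => if h : 1 ≤ t ∧ t ≤ n then f ⟨t - 1, by omega⟩ else 0

lemma ofFin_apply_add_one {n : ℕ} (f : Fin n → ℕ) (i : Fin n) : ofFin f (i + 1) = f i := by
  simp [ofFin, i.2]

lemma isWord_ofFin {n : ℕ} (f : Fin n → ℕ) : IsWord n (ofFin f) := fun t ht => by
  rw [ofFin, dif_neg (by simpa using ht)]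

lemma graph_ofFin {n : ℕ} (f g : Fin n → ℕ) :
    graph n (ofFin f) (ofFin g) = univ.image fun i => (f i, g i) := by
  simp only [graph, image_Icc_one_eq_image_univ, ofFin_apply_add_one]

lemma bijOn_graph (n : ℕ) :
    Set.BijOn (fun x => graph n x.1 x.2) (BBurPairs n) (BurgeSets n) := by
  refine ⟨?_, ?_, ?_⟩
  · rintro ⟨u, v⟩ huv
    obtain ⟨-, hmono, hp, hq⟩ := mk_mem_bBurPairs_iff.mp huv
    exact ⟨card_graph hmono, hp, hq⟩
  · rintro ⟨u, v⟩ huv ⟨u', v'⟩ huv' (h : graph n u v = graph n u' v')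
    obtain ⟨⟨hu, hv⟩, hmono, -⟩ := mk_mem_bBurPairs_iff.mp huv
    obtain ⟨⟨hu', hv'⟩, hmono', -⟩ := mk_mem_bBurPairs_iff.mp huv'
    have hEq := eqOn_of_strictMonoOn_of_image_eq hmono hmono'
      (by rw [← image_burgeOrder_graph, h, image_burgeOrder_graph])
    have hpt : ∀ t, (u t, v t) = (u' t, v' t) := fun t => by
      by_cases ht : t ∈ Set.Icc 1 n
      · exact burgeOrder.injective (hEq ht)
      · rw [hu t ht, hv t ht, hu' t ht, hv' t ht]
    exact Prod.ext (funext fun t => congrArg Prod.fst (hpt t))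
      (funext fun t => congrArg Prod.snd (hpt t))
  · rintro S ⟨hcard, hp, hq⟩
    set e := (S.map burgeOrder.toEmbedding).orderEmbOfFin (by simpa using hcard)
    set u := ofFin fun i => (burgeOrder.symm (e i)).1
    set v := ofFin fun i => (burgeOrder.symm (e i)).2
    have hgraph : graph n u v = S := by
      rw [graph_ofFin]
      change univ.image (burgeOrder.symm ∘ e) = S
      rw [← image_image, image_orderEmbOfFin_univ, map_eq_image, image_image]
      simp
    have hmono : StrictMonoOn (fun t => burgeOrder (u t, v t)) (Set.Icc 1 n) := by
      rintro s hs t ht hst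
      obtain ⟨i, rfl⟩ := exists_fin_add_one_eq hs
      obtain ⟨j, rfl⟩ := exists_fin_add_one_eq ht
      simp only [u, v, ofFin_apply_add_one, Prod.mk.eta, Equiv.apply_symm_apply]
      exact e.strictMono (by simpa using hst)
    exact ⟨(u, v), mk_mem_bBurPairs_iff.mpr ⟨⟨isWord_ofFin _, isWord_ofFin _⟩, hmono,
      hgraph ▸ hp, hgraph ▸ hq⟩, hgraph⟩

lemma isPermWord_iff {n : ℕ} {v : ℕ → ℕ} :
    IsPermWord n v ↔ IsCayley n v ∧ Set.InjOn v (Set.Icc 1 n) := by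
  constructor
  · rintro ⟨hw, hbij⟩
    exact ⟨⟨hw, n, hbij.image_eq⟩, hbij.injOn⟩
  · rintro ⟨⟨hw, k, hk⟩, hinj⟩
    have hcard : (Set.Icc 1 k).ncard = (Set.Icc 1 n).ncard := hk ▸ hinj.ncard_image
    obtain rfl : k = n := by simpa using hcard
    exact ⟨hw, by simpa [hk] using hinj.bijOn_image⟩

lemma sdesSet_eq_desSet {n : ℕ} {v : ℕ → ℕ} (hv : Set.InjOn v (Set.Icc 1 n)) :
    sdesSet n v = desSet n v := by
  refine filter_congr fun i hi => ?_
  have hi := mem_Icc.mp hi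
  have hne : v (i + 1) ≠ v i := fun h => by
    have := hv (Set.mem_Icc.mpr ⟨by omega, by omega⟩) (Set.mem_Icc.mpr ⟨hi.1, by omega⟩) h
    omega
  omega

lemma injOn_snd_graph_iff {n : ℕ} {u v : ℕ → ℕ}
    (h : Set.InjOn (fun t => (u t, v t)) (Set.Icc 1 n)) :
    Set.InjOn Prod.snd (↑(graph n u v) : Set (ℕ × ℕ)) ↔ Set.InjOn v (Set.Icc 1 n) := by
  rw [graph, coe_image, coe_Icc, ← h.comp_iff]
  rfl

lemma pBurPairs_eq_sep (n : ℕ) :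
    PBurPairs n =
      {x ∈ BBurPairs n | Set.InjOn Prod.snd (↑(graph n x.1 x.2) : Set (ℕ × ℕ))} := by
  ext ⟨u, v⟩
  constructor
  · rintro ⟨hu, hv, hd⟩
    obtain ⟨hvC, hinj⟩ := isPermWord_iff.mp hv
    have hB : (u, v) ∈ BBurPairs n := ⟨hu, hvC, sdesSet_eq_desSet hinj ▸ hd⟩
    exact ⟨hB, (injOn_snd_graph_iff (mk_mem_bBurPairs_iff.mp hB).2.1.injOn.of_comp).mpr hinj⟩
  · rintro ⟨hB, hinj⟩
    have hinj' := (injOn_snd_graph_iff (mk_mem_bBurPairs_iff.mp hB).2.1.injOn.of_comp).mp hinj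
    exact ⟨hB.1, isPermWord_iff.mpr ⟨hB.2.1, hinj'⟩, sdesSet_eq_desSet hinj' ▸ hB.2.2⟩

/-- Proposition 3.1: binary Burge matrices of size `n` are equinumerous with
pairs `(u,v) ∈ WI[n] × Cay[n]` with `Des(u) ⊆ Des∘(v)`, and Burge matrices of
size `n` with all column sums `1` are equinumerous with pairs
`(u,v) ∈ WI[n] × S_n` with `Des(u) ⊆ Des(v)`. -/
theorem stmt2 (n : ℕ) :
    Set.ncard (BinaryBurgeMatrices n) = Set.ncard (BBurPairs n) ∧
    Set.ncard (ColSumOneBurgeMatrices n) = Set.ncard (PBurPairs n) := by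
  have hM := bijOn_support n
  have hW := bijOn_graph n
  refine ⟨hM.ncard_eq.trans hW.ncard_eq.symm, ?_⟩
  rw [colSumOneBurgeMatrices_eq_sep, pBurPairs_eq_sep]
  exact (hM.sep fun S => Set.InjOn Prod.snd (↑S : Set (ℕ × ℕ))).ncard_eq.trans
    (hW.sep _).ncard_eq.symm

end CayPaper
end

section
/- Let n ≥ 1 and let u be a weakly increasing Cayley permutation of length n. Let u* (the conjugate of u) be the unique weakly increasing Cayley permutation of length n whose descent set is {1,…,n−1} \ Des(u). Then for each i ∈ {1,…,n}, u*(i) = i + 1 − u(i). -/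
namespace CayPaper

lemma wi_pos (n : ℕ) (v : ℕ → ℕ) (hv : IsWI n v) :
    ∀ i ∈ Set.Icc 1 n, 1 ≤ v i := by
  obtain ⟨⟨_, k, himg⟩, _⟩ := hv
  intro i hi
  have : v i ∈ Set.Icc 1 k := himg ▸ Set.mem_image_of_mem v hi
  exact this.1

lemma wi_first (n : ℕ) (hn : 1 ≤ n) (v : ℕ → ℕ) (hv : IsWI n v) : v 1 = 1 := by
  obtain ⟨⟨_, k, himg⟩, hmono⟩ := hv
  have h1 : (1 : ℕ) ∈ Set.Icc 1 n := by simp [hn]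
  have hv1 : v 1 ∈ Set.Icc 1 k := himg ▸ Set.mem_image_of_mem v h1
  have hk : (1 : ℕ) ∈ Set.Icc 1 k := ⟨le_refl 1, le_trans hv1.1 hv1.2⟩
  obtain ⟨j, hj, hvj⟩ := himg ▸ hk
  have h1le := hv1.1
  have := hmono h1 hj hj.1
  omega

lemma wi_step (n : ℕ) (v : ℕ → ℕ) (hv : IsWI n v) :
    ∀ i, 1 ≤ i → i + 1 ≤ n → v (i + 1) ≤ v i + 1 := by
  obtain ⟨⟨_, k, himg⟩, hmono⟩ := hv
  intro i h1 h2
  by_contra h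
  push_neg at h
  have hi : i ∈ Set.Icc 1 n := ⟨h1, by omega⟩
  have hi1 : i + 1 ∈ Set.Icc 1 n := ⟨by omega, h2⟩
  have hvi : v i ∈ Set.Icc 1 k := himg ▸ Set.mem_image_of_mem v hi
  have hvi1 : v (i + 1) ∈ Set.Icc 1 k := himg ▸ Set.mem_image_of_mem v hi1
  obtain ⟨hvi1a, hvi1b⟩ := hvi1
  have hmem : v i + 1 ∈ Set.Icc 1 k := ⟨by omega, by omega⟩
  obtain ⟨j, hj, hvj⟩ := himg ▸ hmem
  rcases le_or_gt j i with hle | hlt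
  · have := hmono hj hi hle; omega
  · have := hmono hi1 hj hlt; omega

lemma mem_desSet (n : ℕ) (v : ℕ → ℕ) (i : ℕ) :
    i ∈ desSet n v ↔ (1 ≤ i ∧ i ≤ n - 1) ∧ v (i + 1) ≤ v i := by
  simp [desSet, Finset.mem_filter, Finset.mem_Icc]

/-- Lemma 3.2: the conjugate `u*` of a weakly increasing Cayley permutation `u`
(the unique weakly increasing Cayley permutation with descent set
`{1,…,n−1} \ Des(u)`) satisfies `u*(i) = i + 1 − u(i)`. -/
theorem stmt3 (n : ℕ) (hn : 1 ≤ n) (u ustar : ℕ → ℕ)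
    (hu : IsWI n u) (hstar : IsWI n ustar)
    (hdes : desSet n ustar = Finset.Icc 1 (n - 1) \ desSet n u) :
    ∀ i ∈ Set.Icc 1 n, ustar i = i + 1 - u i := by
  have hupos := wi_pos n u hu
  have hspos := wi_pos n ustar hstar
  have key : ∀ i, 1 ≤ i → i ≤ n → ustar i + u i = i + 1 := by
    intro i
    induction i with
    | zero => omega
    | succ m ih =>
      intro h1 h2
      rcases Nat.eq_or_lt_of_le h1 with heq | hlt
      · have hm0 : m = 0 := by omega
        subst hm0
        have := wi_first n hn u hu
        have := wi_first n hn ustar hstar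
        simp only [Nat.zero_add]
        omega
      · have hm1 : 1 ≤ m := by omega
        have hsum := ih hm1 (by omega)
        have hmIcc : m ∈ Set.Icc 1 n := ⟨hm1, by omega⟩
        have hm1Icc : m + 1 ∈ Set.Icc 1 n := ⟨by omega, h2⟩
        have humono := hu.2 hmIcc hm1Icc (by omega)
        have hsmono := hstar.2 hmIcc hm1Icc (by omega)
        have hustep := wi_step n u hu m hm1 h2
        have hsstep := wi_step n ustar hstar m hm1 h2
        have hcompl : m ∈ desSet n ustar ↔ ((1 ≤ m ∧ m ≤ n - 1) ∧ m ∉ desSet n u) := by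
          rw [hdes]
          simp [Finset.mem_sdiff, Finset.mem_Icc]
        rw [mem_desSet] at hcompl
        rw [mem_desSet] at hcompl
        have hrange : 1 ≤ m ∧ m ≤ n - 1 := ⟨hm1, by omega⟩
        by_cases hd : u (m + 1) ≤ u m
        · -- m is a descent of u, so not of ustar
          have : ¬ (ustar (m + 1) ≤ ustar m) := by
            intro hc
            exact (hcompl.mp ⟨hrange, hc⟩).2 ⟨hrange, hd⟩
          omega
        · -- m is not a descent of u, so a descent of ustar
          have : ustar (m + 1) ≤ ustar m :=
            (hcompl.mpr ⟨hrange, fun hc => hd hc.2⟩).2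
          omega
  intro i hi
  have hk := key i hi.1 hi.2
  have hp := hupos i hi
  have hp2 := hspos i hi
  omega

end CayPaper
end

section
/- Let n ≥ 1. For every Cayley permutation x of length n, Γ(id, x) is a permutation of {1,…,n}, and it is the unique permutation v ∈ S_n such that x belongs to the Fishburn basis of v. Consequently Cay[n] is the disjoint union over v ∈ S_n of the Fishburn bases basis(v). -/
namespace CayPaper

/-!
Sorting the columns `(x_i, i)` means listing the positions `1,…,n` in increasing order of the
key `i ↦ (x_i, −i)`, compared lexicographically. This key is injective, so the positions are
totally ordered by it, and the only permutation listing them in increasing key order is the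
increasing enumeration of the (n-element) set of keys, read back through the key.
-/

section SortingByKey

variable {β : Type*} [LinearOrder β] {n : ℕ} {f : ℕ → β}

theorem strictMonoOn_Icc_one_iff_lt_add_one {γ : Type*} [Preorder γ] {g : ℕ → γ} :
    StrictMonoOn g (Set.Icc 1 n) ↔ ∀ i ∈ Finset.Icc 1 (n - 1), g i < g (i + 1) := by
  constructor
  · intro hg i hi
    rw [Finset.mem_Icc] at hi
    exact hg ⟨hi.1, by omega⟩ ⟨by omega, by omega⟩ (Nat.lt_add_one i)
  · intro hg
    refine strictMonoOn_of_lt_succ Set.ordConnected_Icc fun i _ hi hsi => ?_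
    rw [Order.succ_eq_add_one] at hsi ⊢
    exact hg i (Finset.mem_Icc.mpr ⟨hi.1, by have := hsi.2; omega⟩)

theorem card_image_Icc_one (hf : Set.InjOn f (Set.Icc 1 n)) :
    ((Finset.Icc 1 n).image f).card = n := by
  rw [Finset.card_image_of_injOn (by rwa [Finset.coe_Icc]), Nat.card_Icc, Nat.add_sub_cancel]

theorem IsPermWord.apply_add_one_eq_orderEmbOfFin {v : ℕ → ℕ} (hv : IsPermWord n v)
    (hvf : StrictMonoOn (f ∘ v) (Set.Icc 1 n)) (hcard : ((Finset.Icc 1 n).image f).card = n)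
    (j : Fin n) : f (v (j + 1)) = ((Finset.Icc 1 n).image f).orderEmbOfFin hcard j := by
  have hmem (j : Fin n) : (j : ℕ) + 1 ∈ Set.Icc 1 n := ⟨by omega, j.isLt⟩
  refine congrFun (Finset.orderEmbOfFin_unique hcard (f := fun j : Fin n => f (v (j + 1)))
    (fun j => Finset.mem_image_of_mem f ?_) fun a b hab => hvf (hmem a) (hmem b) ?_) j
  · simpa using hv.2.mapsTo (hmem j)
  · simpa using hab

theorem IsPermWord.eq_of_strictMonoOn_comp (hf : Set.InjOn f (Set.Icc 1 n)) {v w : ℕ → ℕ}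
    (hv : IsPermWord n v) (hw : IsPermWord n w) (hvf : StrictMonoOn (f ∘ v) (Set.Icc 1 n))
    (hwf : StrictMonoOn (f ∘ w) (Set.Icc 1 n)) : v = w := by
  funext i
  by_cases hi : i ∈ Set.Icc 1 n
  · obtain ⟨j, rfl⟩ : ∃ j : Fin n, i = j + 1 :=
      ⟨⟨i - 1, Nat.sub_one_lt_of_le hi.1 hi.2⟩, (Nat.sub_add_cancel hi.1).symm⟩
    refine hf (hv.2.mapsTo hi) (hw.2.mapsTo hi) ?_
    rw [hv.apply_add_one_eq_orderEmbOfFin hvf (card_image_Icc_one hf),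
      hw.apply_add_one_eq_orderEmbOfFin hwf (card_image_Icc_one hf)]
  · rw [hv.1 i hi, hw.1 i hi]

theorem exists_isPermWord_strictMonoOn_comp (hf : Set.InjOn f (Set.Icc 1 n)) :
    ∃ v, IsPermWord n v ∧ StrictMonoOn (f ∘ v) (Set.Icc 1 n) := by
  classical
  have hcard := card_image_Icc_one hf
  set e := ((Finset.Icc 1 n).image f).orderEmbOfFin hcard
  let v : ℕ → ℕ := fun i => if hi : i ∈ Set.Icc 1 n then
    Function.invFunOn f (Set.Icc 1 n) (e ⟨i - 1, Nat.sub_one_lt_of_le hi.1 hi.2⟩) else 0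
  have hv (i : ℕ) (hi : i ∈ Set.Icc 1 n) :
      v i ∈ Set.Icc 1 n ∧ f (v i) = e ⟨i - 1, Nat.sub_one_lt_of_le hi.1 hi.2⟩ := by
    have he := Finset.mem_coe.mpr
      (Finset.orderEmbOfFin_mem _ hcard ⟨i - 1, Nat.sub_one_lt_of_le hi.1 hi.2⟩)
    rw [Finset.coe_image, Finset.coe_Icc] at he
    simp only [v, dif_pos hi]
    exact ⟨Function.invFunOn_mem he, Function.invFunOn_eq he⟩
  have hmono : StrictMonoOn (f ∘ v) (Set.Icc 1 n) := fun a ha b hb hab => by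
    rw [Function.comp_apply, Function.comp_apply, (hv a ha).2, (hv b hb).2,
      OrderEmbedding.lt_iff_lt, Fin.mk_lt_mk]
    exact Nat.sub_lt_sub_right ha.1 hab
  have hbij : Set.BijOn v (Set.Icc 1 n) (Set.Icc 1 n) :=
    ((Set.finite_Icc 1 n).injOn_iff_bijOn_of_mapsTo fun i hi => (hv i hi).1).mp
      hmono.injOn.of_comp
  exact ⟨v, ⟨fun i hi => dif_neg hi, hbij⟩, hmono⟩

theorem existsUnique_isPermWord_strictMonoOn_comp (hf : Set.InjOn f (Set.Icc 1 n)) :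
    ∃! v, IsPermWord n v ∧ StrictMonoOn (f ∘ v) (Set.Icc 1 n) :=
  existsUnique_of_exists_of_unique (exists_isPermWord_strictMonoOn_comp hf) fun _ _ hv hw =>
    hv.1.eq_of_strictMonoOn_comp hf hw.1 hv.2 hw.2

end SortingByKey

def sortKey (x : ℕ → ℕ) (i : ℕ) : ℕ ×ₗ ℕᵒᵈ := toLex (x i, OrderDual.toDual i)

theorem sortKey_injective (x : ℕ → ℕ) : Function.Injective (sortKey x) := fun _ _ h =>
  OrderDual.toDual.injective (Prod.ext_iff.mp (toLex.injective h)).2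

theorem sortKey_lt_sortKey_iff {x : ℕ → ℕ} {a b : ℕ} :
    sortKey x a < sortKey x b ↔ x a < x b ∨ x a = x b ∧ b < a := by
  rw [sortKey, sortKey, Prod.Lex.toLex_lt_toLex, OrderDual.toDual_lt_toDual]

theorem sortsColumns_iff_strictMonoOn {n : ℕ} {x v : ℕ → ℕ} :
    sortsColumns n x v ↔ StrictMonoOn (sortKey x ∘ v) (Set.Icc 1 n) := by
  simp only [strictMonoOn_Icc_one_iff_lt_add_one, sortsColumns, Function.comp_apply,
    sortKey_lt_sortKey_iff]

theorem existsUnique_isPermWord_sortsColumns (n : ℕ) (x : ℕ → ℕ) :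
    ∃! v, IsPermWord n v ∧ sortsColumns n x v := by
  simpa only [sortsColumns_iff_strictMonoOn] using
    existsUnique_isPermWord_strictMonoOn_comp (sortKey_injective x).injOn

theorem stmt7_general (n : ℕ) :
    (∀ x : ℕ → ℕ, IsCayley n x →
      ∃! v : ℕ → ℕ, IsPermWord n v ∧ x ∈ fishburnBasis n v) ∧
    {x : ℕ → ℕ | IsCayley n x}
      = ⋃ v ∈ {v : ℕ → ℕ | IsPermWord n v}, fishburnBasis n v := by
  have basis_unique (x : ℕ → ℕ) (hx : IsCayley n x) :
      ∃! v : ℕ → ℕ, IsPermWord n v ∧ x ∈ fishburnBasis n v := by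
    simpa only [fishburnBasis, Set.mem_ofPred_eq, hx, true_and] using
      existsUnique_isPermWord_sortsColumns n x
  refine ⟨basis_unique, Set.Subset.antisymm (fun x hx => ?_) ?_⟩
  · obtain ⟨v, hv, -⟩ := basis_unique x hx
    exact Set.mem_biUnion hv.1 hv.2
  · simp only [Set.iUnion_subset_iff]
    exact fun v _ x hx => hx.1

/-- For every Cayley permutation `x` there is a unique permutation `v` with
`x ∈ basis(v)` (namely `v = Γ(id,x)`); consequently `Cay[n]` is the disjoint
union of the Fishburn bases. -/
theorem stmt7 (n : ℕ) (hn : 1 ≤ n) :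
    (∀ x : ℕ → ℕ, IsCayley n x →
      ∃! v : ℕ → ℕ, IsPermWord n v ∧ x ∈ fishburnBasis n v) ∧
    {x : ℕ → ℕ | IsCayley n x}
      = ⋃ v ∈ {v : ℕ → ℕ | IsPermWord n v}, fishburnBasis n v :=
  stmt7_general n

end CayPaper
end

section
/- Let n ≥ 1 and let v be a Cayley permutation of length n. Then, as identities in ℤ[t]: (1+t)^{des(v)} = Σ_{u ∈ WI[n], Des(u) ⊆ Des(v)} t^{n − max(u)} and (1+t)^{des∘(v)} = Σ_{u ∈ WI[n], Des(u) ⊆ Des∘(v)} t^{n − max(u)}, where max(u) denotes the maximum value of u. -/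
namespace CayPaper

/-!
A weakly increasing Cayley permutation `u` starts at `1` and climbs by one exactly at its
ascents, so it is determined by `Des(u)`, every subset of `{1,…,n−1}` occurs, and
`n − max(u) = |Des(u)|`. Both sums therefore run over the subsets `T` of a fixed set `S`
(`Des(v)` or `Des∘(v)`) with weight `t^|T|`, and equal `(1+t)^|S|`.
-/

open Finset

lemma Nat.exists_eq_of_le_of_succ_le {f : ℕ → ℕ} {a b m : ℕ} (hab : a ≤ b)
    (hf : ∀ i, a ≤ i → i < b → f (i + 1) ≤ f i + 1) (ha : f a ≤ m) (hb : m ≤ f b) :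
    ∃ j, a ≤ j ∧ j ≤ b ∧ f j = m := by
  induction b, hab using Nat.le_induction with
  | base => exact ⟨a, le_rfl, le_rfl, by omega⟩
  | succ b hab ih =>
    by_cases hm : m ≤ f b
    · obtain ⟨j, haj, hjb, hj⟩ := ih (fun i hai hib => hf i hai (by omega)) hm
      exact ⟨j, haj, by omega, hj⟩
    · exact ⟨b + 1, by omega, le_rfl, by have := hf b hab (by omega); omega⟩

def wiOfDesSet (n : ℕ) (T : Finset ℕ) : ℕ → ℕ := fun i =>
  if i ∈ Set.Icc 1 n then 1 + #(Ico 1 i \ T) else 0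

section wiOfDesSet

variable {n i : ℕ} {T : Finset ℕ}

lemma wiOfDesSet_of_mem (hi : i ∈ Set.Icc 1 n) : wiOfDesSet n T i = 1 + #(Ico 1 i \ T) :=
  if_pos hi

lemma wiOfDesSet_one (hn : 1 ≤ n) : wiOfDesSet n T 1 = 1 := by
  simp [wiOfDesSet_of_mem (show 1 ∈ Set.Icc 1 n from ⟨le_rfl, hn⟩)]

lemma wiOfDesSet_succ (h1 : 1 ≤ i) (h2 : i < n) :
    wiOfDesSet n T (i + 1) = wiOfDesSet n T i + if i ∈ T then 0 else 1 := by
  rw [wiOfDesSet_of_mem ⟨by omega, h2⟩, wiOfDesSet_of_mem ⟨h1, h2.le⟩,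
    Nat.Ico_succ_right_eq_insert_Ico h1]
  split_ifs with hiT
  · rw [insert_sdiff_of_mem _ hiT, add_zero]
  · rw [insert_sdiff_of_notMem _ hiT, card_insert_of_notMem (by simp)]
    ring

lemma monotoneOn_wiOfDesSet : MonotoneOn (wiOfDesSet n T) (Set.Icc 1 n) := by
  intro a ha b hb hab
  rw [wiOfDesSet_of_mem ha, wiOfDesSet_of_mem hb]
  gcongr

lemma isWI_wiOfDesSet (hn : 1 ≤ n) : IsWI n (wiOfDesSet n T) := by
  refine ⟨⟨fun i hi => if_neg hi, wiOfDesSet n T n, ?_⟩, monotoneOn_wiOfDesSet⟩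
  ext m
  constructor
  · rintro ⟨j, hj, rfl⟩
    exact ⟨by rw [wiOfDesSet_of_mem hj]; omega,
      monotoneOn_wiOfDesSet hj ⟨hn, le_rfl⟩ hj.2⟩
  · rintro ⟨hm1, hmn⟩
    obtain ⟨j, h1j, hjn, hj⟩ := Nat.exists_eq_of_le_of_succ_le hn
      (fun i h1i hin => by rw [wiOfDesSet_succ h1i hin]; split_ifs <;> omega)
      (by rwa [wiOfDesSet_one hn]) hmn
    exact ⟨j, ⟨h1j, hjn⟩, hj⟩

lemma desSet_wiOfDesSet (hT : T ⊆ Icc 1 (n - 1)) : desSet n (wiOfDesSet n T) = T := by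
  ext i
  rw [desSet, mem_filter]
  constructor
  · rintro ⟨hi, hle⟩
    rw [mem_Icc] at hi
    rw [wiOfDesSet_succ hi.1 (by omega)] at hle
    by_contra hiT
    simp [hiT] at hle
  · intro hiT
    have hi := mem_Icc.mp (hT hiT)
    refine ⟨hT hiT, ?_⟩
    rw [wiOfDesSet_succ hi.1 (by omega), if_pos hiT, add_zero]

end wiOfDesSet

section IsWI

variable {n : ℕ} {u : ℕ → ℕ}

lemma IsWI.apply_one (hu : IsWI n u) (hn : 1 ≤ n) : u 1 = 1 := by
  obtain ⟨⟨-, k, himg⟩, hmono⟩ := hu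
  have hu1 : u 1 ∈ Set.Icc 1 k := himg ▸ Set.mem_image_of_mem u ⟨le_rfl, hn⟩
  obtain ⟨j, hj, huj⟩ : 1 ∈ u '' Set.Icc 1 n := himg ▸ ⟨le_rfl, hu1.1.trans hu1.2⟩
  have := hmono ⟨le_rfl, hn⟩ hj hj.1
  have := hu1.1
  omega

/-- The image of `u` is an interval, so `u` cannot skip a value. -/
lemma IsWI.apply_succ_le (hu : IsWI n u) {i : ℕ} (h1 : 1 ≤ i) (h2 : i < n) :
    u (i + 1) ≤ u i + 1 := by
  obtain ⟨⟨-, k, himg⟩, hmono⟩ := hu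
  by_contra! hgap
  have hk : u (i + 1) ∈ Set.Icc 1 k := himg ▸ Set.mem_image_of_mem u ⟨by omega, h2⟩
  obtain ⟨j, hj, huj⟩ : u i + 1 ∈ u '' Set.Icc 1 n := himg ▸ ⟨by omega, by have := hk.2; omega⟩
  rcases le_or_gt j i with hji | hij
  · have : u j ≤ u i := hmono hj ⟨h1, h2.le⟩ hji
    omega
  · have : u (i + 1) ≤ u j := hmono ⟨by omega, h2⟩ hj hij
    omega

lemma IsWI.apply_succ (hu : IsWI n u) {i : ℕ} (h1 : 1 ≤ i) (h2 : i < n) :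
    u (i + 1) = u i + if i ∈ desSet n u then 0 else 1 := by
  have hle : u i ≤ u (i + 1) := hu.2 ⟨h1, h2.le⟩ ⟨by omega, h2⟩ (by omega)
  have := hu.apply_succ_le h1 h2
  have hdes : i ∈ desSet n u ↔ u (i + 1) ≤ u i := by
    simp only [desSet, mem_filter, mem_Icc]; omega
  split_ifs with hi <;> rw [hdes] at hi <;> omega

lemma IsWI.eq_wiOfDesSet (hu : IsWI n u) (hn : 1 ≤ n) : u = wiOfDesSet n (desSet n u) := by
  funext i
  by_cases hi : i ∈ Set.Icc 1 n
  · obtain ⟨h1, hin⟩ := hi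
    induction i, h1 using Nat.le_induction with
    | base => rw [hu.apply_one hn, wiOfDesSet_one hn]
    | succ i h1 ih =>
      rw [hu.apply_succ h1 hin, wiOfDesSet_succ h1 hin, ih (by omega)]
  · rw [hu.1.1 i hi, wiOfDesSet, if_neg hi]

lemma wmax_eq_of_monotoneOn (hn : 1 ≤ n) (hu : MonotoneOn u (Set.Icc 1 n)) :
    wmax n u = u n :=
  le_antisymm
    (Finset.sup_le fun i hi => hu (by simpa using hi) ⟨hn, le_rfl⟩ (mem_Icc.mp hi).2)
    (le_sup (by simp [hn]))

lemma IsWI.sub_wmax (hu : IsWI n u) (hn : 1 ≤ n) : n - wmax n u = #(desSet n u) := by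
  have hsub : desSet n u ⊆ Ico 1 n := fun i hi => by
    have := mem_Icc.mp (mem_filter.mp hi).1; simp only [mem_Ico]; omega
  have hcard := card_sdiff_of_subset hsub
  rw [wmax_eq_of_monotoneOn hn hu.2,
    (congrFun (hu.eq_wiOfDesSet hn) n).trans (wiOfDesSet_of_mem ⟨hn, le_rfl⟩), hcard,
    Nat.card_Ico]
  have := card_le_card hsub
  rw [Nat.card_Ico] at this
  omega

end IsWI

lemma one_add_X_pow_card_eq_finsum (n : ℕ) (hn : 1 ≤ n) (S : Finset ℕ)
    (hS : S ⊆ Icc 1 (n - 1)) :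
    (1 + Polynomial.X : Polynomial ℤ) ^ #S
      = ∑ᶠ u ∈ {u : ℕ → ℕ | IsWI n u ∧ desSet n u ⊆ S},
          (Polynomial.X : Polynomial ℤ) ^ (n - wmax n u) := by
  have hbij : Set.BijOn (desSet n) {u | IsWI n u ∧ desSet n u ⊆ S} ↑S.powerset := by
    refine ⟨fun u hu => by simpa using hu.2, fun u hu w hw h => ?_, fun T hT => ?_⟩
    · rw [hu.1.eq_wiOfDesSet hn, hw.1.eq_wiOfDesSet hn, h]
    · have hTS : T ⊆ S := by simpa using hT
      exact ⟨wiOfDesSet n T, ⟨isWI_wiOfDesSet hn, by rwa [desSet_wiOfDesSet (hTS.trans hS)]⟩,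
        desSet_wiOfDesSet (hTS.trans hS)⟩
  rw [finsum_mem_eq_of_bijOn (desSet n) hbij (g := fun T => Polynomial.X ^ #T)
      fun u hu => by rw [hu.1.sub_wmax hn],
    finsum_mem_coe_finset, add_comm, ← sum_pow_mul_eq_add_pow]
  simp

theorem stmt10_general (n : ℕ) (hn : 1 ≤ n) (v : ℕ → ℕ) :
    ((1 + Polynomial.X : Polynomial ℤ) ^ des n v
      = ∑ᶠ u ∈ {u : ℕ → ℕ | IsWI n u ∧ desSet n u ⊆ desSet n v},
          (Polynomial.X : Polynomial ℤ) ^ (n - wmax n u)) ∧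
    ((1 + Polynomial.X : Polynomial ℤ) ^ sdes n v
      = ∑ᶠ u ∈ {u : ℕ → ℕ | IsWI n u ∧ desSet n u ⊆ sdesSet n v},
          (Polynomial.X : Polynomial ℤ) ^ (n - wmax n u)) :=
  ⟨one_add_X_pow_card_eq_finsum n hn _ (filter_subset _ _),
    one_add_X_pow_card_eq_finsum n hn _ (filter_subset _ _)⟩

/-- Lemma 6.2: `(1+t)^{des(v)} = Σ_{u ∈ WI(v)} t^{n−max(u)}` and
`(1+t)^{des∘(v)} = Σ_{u ∈ WI(v), Des(u) ⊆ Des∘(v)} t^{n−max(u)}` in `ℤ[t]`. -/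
theorem stmt10 (n : ℕ) (hn : 1 ≤ n) (v : ℕ → ℕ) (hv : IsCayley n v) :
    ((1 + Polynomial.X : Polynomial ℤ) ^ des n v
      = ∑ᶠ u ∈ {u : ℕ → ℕ | IsWI n u ∧ desSet n u ⊆ desSet n v},
          (Polynomial.X : Polynomial ℤ) ^ (n - wmax n u)) ∧
    ((1 + Polynomial.X : Polynomial ℤ) ^ sdes n v
      = ∑ᶠ u ∈ {u : ℕ → ℕ | IsWI n u ∧ desSet n u ⊆ sdesSet n v},
          (Polynomial.X : Polynomial ℤ) ^ (n - wmax n u)) :=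
  stmt10_general n hn v

end CayPaper
end

section
/- Let n ≥ 1 and let v be a permutation of {1,…,n}. Then, as an identity in ℤ[t]: Σ_{x ∈ basis(v)} t^{n − max(x)} = Σ_{u ∈ WI[n], Des(u) ⊆ Des(v)} t^{n − max(u)}, where max(w) denotes the maximum value of w. -/
namespace CayPaper

/-! For a permutation `v`, the Burge sort of the columns `(x_i, i)` lists the positions in the
order `v` exactly when `u = x ∘ v` is weakly increasing and every tie `u(i) = u(i+1)` sits at a
descent of `v`. Hence `x ↦ x ∘ v` is a bijection from `basis(v)` onto the weakly increasing
Cayley permutations `u` with `Des(u) ⊆ Des(v)`, and it preserves the maximum. -/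

lemma monotoneOn_Icc_one_iff_le_add_one {β : Type*} [Preorder β] {n : ℕ} {u : ℕ → β} :
    MonotoneOn u (Set.Icc 1 n) ↔ ∀ i ∈ Finset.Icc 1 (n - 1), u i ≤ u (i + 1) := by
  refine ⟨fun h i hi => ?_, fun h => monotoneOn_of_le_succ Set.ordConnected_Icc ?_⟩
  · rw [Finset.mem_Icc] at hi
    exact h ⟨hi.1, by omega⟩ ⟨by omega, by omega⟩ (by omega)
  · intro i _ hi hi'
    simp only [Order.succ_eq_add_one, Set.mem_Icc] at hi hi' ⊢
    exact h i (Finset.mem_Icc.2 ⟨hi.1, by omega⟩)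

section PermWord

variable {n : ℕ} (σ : Equiv.Perm (Fin n))

lemma permWord_mapsTo : Set.MapsTo (permWord n σ) (Set.Icc 1 n) (Set.Icc 1 n) := by
  rintro i ⟨h1, h2⟩
  simp only [permWord, dif_pos (And.intro h1 h2), Set.mem_Icc]
  omega

lemma permWord_inv_leftInvOn : Set.LeftInvOn (permWord n σ⁻¹) (permWord n σ) (Set.Icc 1 n) := by
  rintro i ⟨h1, h2⟩
  simp [permWord, h1, h2]

lemma permWord_bijOn : Set.BijOn (permWord n σ) (Set.Icc 1 n) (Set.Icc 1 n) :=
  Set.InvOn.bijOn ⟨permWord_inv_leftInvOn σ, by simpa using permWord_inv_leftInvOn σ⁻¹⟩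
    (permWord_mapsTo σ) (permWord_mapsTo σ⁻¹)

end PermWord

def precompWord (n : ℕ) (v x : ℕ → ℕ) : ℕ → ℕ := fun i =>
  if i ∈ Set.Icc 1 n then x (v i) else 0

section PrecompWord

variable {n : ℕ} {v w x : ℕ → ℕ}

lemma precompWord_of_mem {i : ℕ} (hi : i ∈ Set.Icc 1 n) : precompWord n v x i = x (v i) :=
  if_pos hi

lemma isWord_precompWord : IsWord n (precompWord n v x) := fun _ hi => if_neg hi

lemma image_precompWord (hv : v '' Set.Icc 1 n = Set.Icc 1 n) :
    precompWord n v x '' Set.Icc 1 n = x '' Set.Icc 1 n := by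
  conv_rhs => rw [← hv, Set.image_image]
  exact Set.image_congr fun i hi => precompWord_of_mem hi

lemma isCayley_precompWord (hv : v '' Set.Icc 1 n = Set.Icc 1 n) (hx : IsCayley n x) :
    IsCayley n (precompWord n v x) :=
  ⟨isWord_precompWord, by rw [image_precompWord hv]; exact hx.2⟩

lemma wmax_precompWord (hv : v '' Set.Icc 1 n = Set.Icc 1 n) :
    wmax n (precompWord n v x) = wmax n x := by
  have hv' : (Finset.Icc 1 n).image v = Finset.Icc 1 n := by
    apply Finset.coe_injective
    simpa using hv
  rw [wmax, wmax]
  conv_rhs => rw [← hv', Finset.sup_image]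
  exact Finset.sup_congr rfl fun i hi => precompWord_of_mem (by simpa using hi)

lemma precompWord_precompWord (hx : IsWord n x) (hw : Set.MapsTo w (Set.Icc 1 n) (Set.Icc 1 n))
    (hvw : Set.LeftInvOn v w (Set.Icc 1 n)) : precompWord n w (precompWord n v x) = x := by
  funext i
  by_cases hi : i ∈ Set.Icc 1 n
  · rw [precompWord_of_mem hi, precompWord_of_mem (hw hi), hvw hi]
  · rw [hx i hi]
    exact if_neg hi

lemma sortsColumns_iff (hv : Set.InjOn v (Set.Icc 1 n)) :
    sortsColumns n x v ↔ MonotoneOn (precompWord n v x) (Set.Icc 1 n) ∧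
      desSet n (precompWord n v x) ⊆ desSet n v := by
  have step : ∀ i ∈ Finset.Icc 1 (n - 1),
      (x (v i) < x (v (i + 1)) ∨ (x (v i) = x (v (i + 1)) ∧ v (i + 1) < v i)) ↔
        precompWord n v x i ≤ precompWord n v x (i + 1) ∧
          (precompWord n v x (i + 1) ≤ precompWord n v x i → v (i + 1) ≤ v i) := by
    intro i hi
    rw [Finset.mem_Icc] at hi
    have hi0 : i ∈ Set.Icc 1 n := ⟨hi.1, by omega⟩
    have hi1 : i + 1 ∈ Set.Icc 1 n := ⟨by omega, by omega⟩
    have hne : v (i + 1) ≠ v i := fun h => by have := hv hi1 hi0 h; omega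
    rw [precompWord_of_mem hi0, precompWord_of_mem hi1]
    omega
  simp only [sortsColumns, monotoneOn_Icc_one_iff_le_add_one, Finset.subset_iff, desSet,
    Finset.mem_filter]
  constructor
  · intro h
    exact ⟨fun i hi => ((step i hi).1 (h i hi)).1,
      fun i ⟨hi, hle⟩ => ⟨hi, ((step i hi).1 (h i hi)).2 hle⟩⟩
  · rintro ⟨hmono, hdes⟩ i hi
    exact (step i hi).2 ⟨hmono i hi, fun hle => (hdes ⟨hi, hle⟩).2⟩

end PrecompWord

theorem bijOn_precompWord_fishburnBasis {n : ℕ} {v : ℕ → ℕ}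
    (hv : Set.BijOn v (Set.Icc 1 n) (Set.Icc 1 n)) :
    Set.BijOn (precompWord n v) (fishburnBasis n v) {u | IsWI n u ∧ desSet n u ⊆ desSet n v} := by
  set w := Function.invFunOn v (Set.Icc 1 n)
  have hinv : Set.InvOn w v (Set.Icc 1 n) (Set.Icc 1 n) := hv.invOn_invFunOn
  have hw : Set.BijOn w (Set.Icc 1 n) (Set.Icc 1 n) := hv.symm hinv.symm
  refine Set.InvOn.bijOn (f' := precompWord n w) ⟨?_, ?_⟩ ?_ ?_
  · rintro x ⟨⟨hx, -⟩, -⟩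
    exact precompWord_precompWord hx hw.mapsTo hinv.2
  · rintro u ⟨⟨⟨hu, -⟩, -⟩, -⟩
    exact precompWord_precompWord hu hv.mapsTo hinv.1
  · rintro x ⟨hx, hsort⟩
    obtain ⟨hmono, hdes⟩ := (sortsColumns_iff hv.injOn).1 hsort
    exact ⟨⟨isCayley_precompWord hv.image_eq hx, hmono⟩, hdes⟩
  · rintro u ⟨⟨hu, hmono⟩, hdes⟩
    refine ⟨isCayley_precompWord hw.image_eq hu, (sortsColumns_iff hv.injOn).2 ?_⟩
    rw [precompWord_precompWord hu.1 hv.mapsTo hinv.1]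
    exact ⟨hmono, hdes⟩

theorem stmt11_general (n : ℕ) (σ : Equiv.Perm (Fin n)) :
    (∑ᶠ x ∈ fishburnBasis n (permWord n σ),
        (Polynomial.X : Polynomial ℤ) ^ (n - wmax n x))
      = ∑ᶠ u ∈ {u : ℕ → ℕ | IsWI n u ∧ desSet n u ⊆ desSet n (permWord n σ)},
          (Polynomial.X : Polynomial ℤ) ^ (n - wmax n u) :=
  finsum_mem_eq_of_bijOn _ (bijOn_precompWord_fishburnBasis (permWord_bijOn σ)) fun x _ => by
    rw [wmax_precompWord (permWord_bijOn σ).image_eq]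

/-- Lemma 6.3: for a permutation `v`,
`Σ_{x ∈ basis(v)} t^{n−max(x)} = Σ_{u ∈ WI(v)} t^{n−max(u)}` in `ℤ[t]`. -/
theorem stmt11 (n : ℕ) (hn : 1 ≤ n) (σ : Equiv.Perm (Fin n)) :
    (∑ᶠ x ∈ fishburnBasis n (permWord n σ),
        (Polynomial.X : Polynomial ℤ) ^ (n - wmax n x))
      = ∑ᶠ u ∈ {u : ℕ → ℕ | IsWI n u ∧ desSet n u ⊆ desSet n (permWord n σ)},
          (Polynomial.X : Polynomial ℤ) ^ (n - wmax n u) :=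
  stmt11_general n σ

end CayPaper
end
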